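/- arXiv:1203.6717 — 2 statements merged into one kernel-verified Lean document; each statement's English description precedes it below -/
import Mathlib

section
/- Let f : ℂ → ℂ be continuously differentiable (as a real C¹ function) on a neighborhood of the closed disc of radius ε centered at 0. Then f(0) = (1/(2πi))·∮_{|σ|=ε} f(σ)/σ dσ + (1/(2πi))·∬_{|σ|<ε} (∂f/∂σ̄)(σ) · (dσ ∧ dσ̄)/σ. -/
/-!
Let `Φ(r)` be the mean of `f` over the circle of radius `r`. Splitting `Df` into its Wirtinger
parts, `2π Φ'(r) = ∫ (∂f·e^{iθ} + ∂̄f·e^{-iθ}) dθ` along the circle, while the angular derivative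
of `θ ↦ f(re^{iθ})` is `ir (∂f·e^{iθ} - ∂̄f·e^{-iθ})` and integrates to zero over a period. Hence
the two parts have equal integrals and `Φ'(r) = π⁻¹ ∫ ∂̄f(re^{iθ}) e^{-iθ} dθ`. Integrating in `r`
from `0` to `ε` gives `Φ(ε) - f(0)`; in polar coordinates the same double integral is the area
integral of `∂̄f(σ)/σ`, and `Φ(ε)` is the contour term.
-/

open MeasureTheory

/-- The Wirtinger derivative `∂f/∂σ̄ = ½(∂f/∂x + i·∂f/∂y)` of `f : ℂ → ℂ`. -/
noncomputable def wirtingerBar (f : ℂ → ℂ) (z : ℂ) : ℂ :=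
  (1 / 2) * (fderiv ℝ f z 1 + Complex.I * fderiv ℝ f z Complex.I)

open Complex Metric Set Function
open scoped Real ComplexConjugate Topology Interval

noncomputable def wirtinger (f : ℂ → ℂ) (z : ℂ) : ℂ :=
  (1 / 2) * (fderiv ℝ f z 1 - I * fderiv ℝ f z I)

theorem fderiv_apply_eq_wirtinger (f : ℂ → ℂ) (z v : ℂ) :
    fderiv ℝ f z v = wirtinger f z * v + wirtingerBar f z * conj v := by
  have hv : v = v.re • (1 : ℂ) + v.im • I := by simp [Complex.real_smul, re_add_im]
  conv_lhs => rw [hv, map_add, map_smul, map_smul]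
  conv_rhs => rw [← re_add_im v]
  simp only [wirtinger, wirtingerBar, Complex.real_smul, map_add, map_mul, conj_ofReal, conj_I]
  linear_combination (↑v.im * fderiv ℝ f z I) * I_sq

theorem conj_exp_ofReal_mul_I (θ : ℝ) : conj (exp (θ * I)) = exp (-(θ * I)) := by
  rw [← exp_conj, map_mul, conj_ofReal, conj_I, mul_neg]

theorem real_smul_div_circleMap {r : ℝ} (hr : r ≠ 0) (θ : ℝ) (a : ℂ) :
    r • (a / circleMap 0 r θ) = a * exp (-(θ * I)) := by
  rw [circleMap_zero, Complex.real_smul, exp_neg]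
  field_simp [ofReal_ne_zero.mpr hr, exp_ne_zero]

theorem circleMap_zero_mem_ball {r R : ℝ} (hr : |r| < R) (θ : ℝ) :
    circleMap 0 r θ ∈ ball 0 R := by
  simpa [mem_ball_zero_iff, norm_circleMap_zero] using hr

theorem Complex.polarCoord_symm_eq_circleMap (p : ℝ × ℝ) :
    Complex.polarCoord.symm p = circleMap 0 p.1 p.2 := by
  rw [Complex.polarCoord_symm_apply, circleMap_zero, exp_mul_I, ← ofReal_cos, ← ofReal_sin]

theorem ContinuousOn.intervalIntegral_param {X E : Type*} [TopologicalSpace X]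
    [NormedAddCommGroup E] [NormedSpace ℝ E] {F : X → ℝ → E} {s : Set X}
    (hF : ContinuousOn (uncurry F) (s ×ˢ univ)) (a b : ℝ) :
    ContinuousOn (fun x => ∫ t in a..b, F x t) s := by
  rw [continuousOn_iff_continuous_domRestrict]
  refine intervalIntegral.continuous_parametric_intervalIntegral_of_continuous'
    (f := fun (x : s) t => F x t) ?_ a b
  exact hF.comp_continuous (continuous_subtype_val.prodMap continuous_id)
    fun p => ⟨p.1.2, mem_univ _⟩

theorem continuousOn_comp_circleMap_mul_exp {g : ℂ → ℂ} {ε : ℝ}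
    (hg : ContinuousOn g (closedBall 0 ε)) :
    ContinuousOn (fun p : ℝ × ℝ => g (circleMap 0 p.1 p.2) * exp (-(p.2 * I)))
      (Icc 0 ε ×ˢ univ) := by
  refine (hg.comp (by fun_prop : Continuous fun p : ℝ × ℝ => circleMap 0 p.1 p.2).continuousOn
    fun p hp => ?_).mul (by fun_prop)
  simpa [norm_circleMap_zero, abs_of_nonneg hp.1.1] using hp.1.2

theorem setIntegral_ball_eq_intervalIntegral_circleMap {E : Type*} [NormedAddCommGroup E]
    [NormedSpace ℝ E] {h : ℂ → E} {ε : ℝ} (hε : 0 ≤ ε)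
    (hint : IntegrableOn (fun p : ℝ × ℝ => p.1 • h (circleMap 0 p.1 p.2))
      (Ioo 0 ε ×ˢ Ioo (-π) π)) :
    ∫ σ in ball 0 ε, h σ = ∫ r in 0..ε, ∫ θ in 0..2 * π, r • h (circleMap 0 r θ) := by
  have hind : ∀ p ∈ polarCoord.target,
      p.1 • (ball (0 : ℂ) ε).indicator h (Complex.polarCoord.symm p)
        = (Iio ε ×ˢ univ).indicator (fun q : ℝ × ℝ => q.1 • h (circleMap 0 q.1 q.2)) p := by
    rintro p ⟨hp, -⟩
    have hp : 0 < p.1 := hp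
    by_cases hpε : p.1 < ε
    · rw [indicator_of_mem (by simpa [Complex.polarCoord_symm_eq_circleMap, abs_of_pos hp]),
        indicator_of_mem (by simpa), Complex.polarCoord_symm_eq_circleMap]
    · rw [indicator_of_notMem
          (by simpa [Complex.polarCoord_symm_eq_circleMap, abs_of_pos hp] using hpε),
        indicator_of_notMem (by simpa using hpε), smul_zero]
  have htarget : polarCoord.target ∩ Iio ε ×ˢ univ = Ioo 0 ε ×ˢ Ioo (-π) π := by
    ext ⟨r, θ⟩
    simp only [polarCoord_target, mem_inter_iff, mem_prod, mem_Ioi, mem_Iio, mem_Ioo, mem_univ]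
    tauto
  have hinner : ∀ r : ℝ, ∫ θ in Ioo (-π) π, r • h (circleMap 0 r θ)
      = ∫ θ in 0..2 * π, r • h (circleMap 0 r θ) := fun r => by
    have hper : Periodic (fun θ => r • h (circleMap 0 r θ)) (2 * π) :=
      (periodic_circleMap 0 r).comp (fun z => r • h z)
    have hshift := hper.intervalIntegral_add_eq (-π) 0
    rw [show -π + 2 * π = π by ring, zero_add] at hshift
    rw [← integral_Ioc_eq_integral_Ioo,
      ← intervalIntegral.integral_of_le (by linarith [Real.pi_pos]), hshift]
  calc ∫ σ in ball 0 ε, h σ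
      = ∫ p in polarCoord.target,
          p.1 • (ball (0 : ℂ) ε).indicator h (Complex.polarCoord.symm p) := by
        rw [Complex.integral_comp_polarCoord_symm, integral_indicator measurableSet_ball]
    _ = ∫ p in Ioo 0 ε ×ˢ Ioo (-π) π, p.1 • h (circleMap 0 p.1 p.2) := by
        rw [setIntegral_congr_fun polarCoord.open_target.measurableSet hind,
          setIntegral_indicator (measurableSet_Iio.prod MeasurableSet.univ), htarget]
    _ = ∫ r in 0..ε, ∫ θ in 0..2 * π, r • h (circleMap 0 r θ) := by
        rw [Measure.volume_eq_prod, setIntegral_prod _ hint, intervalIntegral.integral_of_le hε,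
          integral_Ioc_eq_integral_Ioo]
        simp_rw [hinner]

theorem setIntegral_ball_div_eq_intervalIntegral {g : ℂ → ℂ} {ε : ℝ} (hε : 0 ≤ ε)
    (hg : ContinuousOn g (closedBall 0 ε)) :
    ∫ σ in ball 0 ε, g σ / σ
      = ∫ r in 0..ε, ∫ θ in 0..2 * π, g (circleMap 0 r θ) * exp (-(θ * I)) := by
  have hint : IntegrableOn (fun p : ℝ × ℝ => g (circleMap 0 p.1 p.2) * exp (-(p.2 * I)))
      (Icc 0 ε ×ˢ Icc (-π) π) :=
    ((continuousOn_comp_circleMap_mul_exp hg).mono (prod_mono_right (subset_univ _))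
      ).integrableOn_compact (isCompact_Icc.prod isCompact_Icc)
  rw [setIntegral_ball_eq_intervalIntegral_circleMap hε
    ((hint.mono_set (prod_mono Ioo_subset_Icc_self Ioo_subset_Icc_self)).congr_fun
      (fun p hp => (real_smul_div_circleMap hp.1.1.ne' _ _).symm)
      (measurableSet_Ioo.prod measurableSet_Ioo))]
  refine intervalIntegral.integral_congr_ae (Filter.Eventually.of_forall fun r hr => ?_)
  rw [uIoc_of_le hε] at hr
  exact intervalIntegral.integral_congr fun θ _ => real_smul_div_circleMap hr.1.ne' θ _

section RealC1

variable {f : ℂ → ℂ} {R : ℝ}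

theorem ContDiffOn.continuousOn_wirtingerBar (hf : ContDiffOn ℝ 1 f (ball 0 R)) :
    ContinuousOn (wirtingerBar f) (ball 0 R) := by
  have h := hf.continuousOn_fderiv_of_isOpen isOpen_ball le_rfl
  unfold wirtingerBar
  fun_prop

theorem hasDerivAt_comp_circleMap_radius (hf : ContDiffOn ℝ 1 f (ball 0 R)) {x : ℝ}
    (hx : |x| < R) (θ : ℝ) :
    HasDerivAt (fun y : ℝ => f (circleMap 0 y θ))
      (fderiv ℝ f (circleMap 0 x θ) (exp (θ * I))) x := by
  have hf' := (hf.differentiableOn one_ne_zero).hasFDerivAt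
    (isOpen_ball.mem_nhds (circleMap_zero_mem_ball hx θ))
  rw [circleMap_zero] at hf'
  simpa [Function.comp_def, circleMap_zero] using
    hf'.comp_hasDerivAt x ((ofRealCLM.hasDerivAt (x := x)).mul_const (exp (θ * I)))

theorem hasDerivAt_circleAverage_radius (hf : ContDiffOn ℝ 1 f (ball 0 R)) {r : ℝ}
    (hr : |r| < R) :
    HasDerivAt (Real.circleAverage f 0)
      ((2 * π)⁻¹ • ∫ θ in 0..2 * π, fderiv ℝ f (circleMap 0 r θ) (exp (θ * I))) r := by
  obtain ⟨ρ, hrρ, hρR⟩ := exists_between hr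
  obtain ⟨M, hM⟩ := (isCompact_closedBall (0 : ℂ) ρ).exists_bound_of_continuousOn
    ((hf.continuousOn_fderiv_of_isOpen isOpen_ball le_rfl).mono (closedBall_subset_ball hρR))
  have hnear : ball r (ρ - |r|) ∈ 𝓝 r := ball_mem_nhds r (by linarith)
  have hlt : ∀ x ∈ ball r (ρ - |r|), |x| < ρ := fun x hx => by
    rw [mem_ball, Real.dist_eq] at hx
    linarith [abs_sub_abs_le_abs_sub x r]
  have hcont : ∀ x, |x| < R → Continuous fun θ => f (circleMap 0 x θ) := fun x hx =>
    hf.continuousOn.comp_continuous (continuous_circleMap 0 x) (circleMap_zero_mem_ball hx)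
  have hF_meas : ∀ᶠ x in 𝓝 r, AEStronglyMeasurable (fun θ => f (circleMap 0 x θ))
      (volume.restrict (Ι 0 (2 * π))) := by
    filter_upwards [hnear] with x hx
    exact (hcont x ((hlt x hx).trans hρR)).aestronglyMeasurable
  have hF'_meas : AEStronglyMeasurable
      (fun θ : ℝ => fderiv ℝ f (circleMap 0 r θ) (exp (θ * I))) (volume.restrict (Ι 0 (2 * π))) :=
    (((hf.continuousOn_fderiv_of_isOpen isOpen_ball le_rfl).comp_continuous
      (continuous_circleMap 0 r) (circleMap_zero_mem_ball hr)).clm_apply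
      (by fun_prop)).aestronglyMeasurable
  have hbound : ∀ᵐ θ, θ ∈ Ι 0 (2 * π) → ∀ x ∈ ball r (ρ - |r|),
      ‖fderiv ℝ f (circleMap 0 x θ) (exp (θ * I))‖ ≤ M := by
    refine Filter.Eventually.of_forall fun θ _ x hx => ?_
    calc ‖fderiv ℝ f (circleMap 0 x θ) (exp (θ * I))‖
        ≤ ‖fderiv ℝ f (circleMap 0 x θ)‖ * ‖exp (θ * I)‖ := ContinuousLinearMap.le_opNorm _ _
      _ ≤ M := by
        rw [norm_exp_ofReal_mul_I, mul_one]
        exact hM _ (by simpa [norm_circleMap_zero] using (hlt x hx).le)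
  have hderiv := intervalIntegral.hasDerivAt_integral_of_dominated_loc_of_deriv_le
    hnear hF_meas ((hcont r hr).intervalIntegrable _ _) hF'_meas hbound intervalIntegrable_const
    (Filter.Eventually.of_forall fun θ _ x hx =>
      hasDerivAt_comp_circleMap_radius hf ((hlt x hx).trans hρR) θ)
  exact hderiv.2.const_smul _

theorem integral_fderiv_circleMap_exp (hf : ContDiffOn ℝ 1 f (ball 0 R)) {r : ℝ} (hr₀ : r ≠ 0)
    (hr : |r| < R) :
    ∫ θ in 0..2 * π, fderiv ℝ f (circleMap 0 r θ) (exp (θ * I))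
      = 2 * ∫ θ in 0..2 * π, wirtingerBar f (circleMap 0 r θ) * exp (-(θ * I)) := by
  set P : ℝ → ℂ := fun θ => wirtinger f (circleMap 0 r θ) * exp (θ * I)
  set Q : ℝ → ℂ := fun θ => wirtingerBar f (circleMap 0 r θ) * exp (-(θ * I))
  have hDc : Continuous fun θ => fderiv ℝ f (circleMap 0 r θ) :=
    (hf.continuousOn_fderiv_of_isOpen isOpen_ball le_rfl).comp_continuous
      (continuous_circleMap 0 r) (circleMap_zero_mem_ball hr)
  have hP : IntervalIntegrable P volume 0 (2 * π) := by
    refine Continuous.intervalIntegrable ?_ _ _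
    simp only [P, wirtinger]
    fun_prop
  have hQ : IntervalIntegrable Q volume 0 (2 * π) := by
    refine Continuous.intervalIntegrable ?_ _ _
    simp only [Q, wirtingerBar]
    fun_prop
  have hradial : ∀ θ : ℝ, fderiv ℝ f (circleMap 0 r θ) (exp (θ * I)) = P θ + Q θ := fun θ => by
    rw [fderiv_apply_eq_wirtinger, conj_exp_ofReal_mul_I]
  have htangential : ∀ θ : ℝ, fderiv ℝ f (circleMap 0 r θ) (circleMap 0 r θ * I)
      = (r * I) * (P θ - Q θ) := fun θ => by
    rw [fderiv_apply_eq_wirtinger, circleMap_zero, map_mul, map_mul, conj_ofReal, conj_I,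
      conj_exp_ofReal_mul_I]
    simp only [P, Q, circleMap_zero]
    ring
  -- `f ∘ circleMap 0 r` is `2π`-periodic, so its derivative integrates to zero.
  have hloop : ∫ θ in 0..2 * π, fderiv ℝ f (circleMap 0 r θ) (circleMap 0 r θ * I) = 0 := by
    rw [intervalIntegral.integral_eq_sub_of_hasDerivAt
      (fun θ _ => ((hf.differentiableOn one_ne_zero).hasFDerivAt
        (isOpen_ball.mem_nhds (circleMap_zero_mem_ball hr θ))).comp_hasDerivAt θ
          (hasDerivAt_circleMap 0 r θ))
      ((hDc.clm_apply (by fun_prop)).intervalIntegrable _ _)]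
    rw [← zero_add (2 * π), (periodic_circleMap 0 r).comp f 0, sub_self]
  have hPQ : ∫ θ in 0..2 * π, P θ = ∫ θ in 0..2 * π, Q θ := by
    simp_rw [htangential, intervalIntegral.integral_const_mul] at hloop
    rw [intervalIntegral.integral_sub hP hQ] at hloop
    have hrI : (r : ℂ) * I ≠ 0 := mul_ne_zero (ofReal_ne_zero.mpr hr₀) I_ne_zero
    exact sub_eq_zero.mp ((mul_eq_zero.mp hloop).resolve_left hrI)
  simp_rw [hradial]
  rw [intervalIntegral.integral_add hP hQ, hPQ]
  ring

theorem circleAverage_sub_eq_integral_wirtingerBar (hf : ContDiffOn ℝ 1 f (ball 0 R)) {ε : ℝ}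
    (hε : 0 ≤ ε) (hεR : ε < R) :
    Real.circleAverage f 0 ε - f 0 = (π : ℂ)⁻¹ *
      ∫ r in 0..ε, ∫ θ in 0..2 * π, wirtingerBar f (circleMap 0 r θ) * exp (-(θ * I)) := by
  have hsmall : ∀ r ∈ Icc 0 ε, |r| < R := fun r hr => by
    rw [abs_of_nonneg hr.1]; linarith [hr.2]
  set B : ℝ → ℂ := fun r => ∫ θ in 0..2 * π, wirtingerBar f (circleMap 0 r θ) * exp (-(θ * I))
  have hB : ContinuousOn B (Icc 0 ε) :=
    (continuousOn_comp_circleMap_mul_exp (hf.continuousOn_wirtingerBar.mono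
      (closedBall_subset_ball hεR))).intervalIntegral_param _ _
  rw [← Real.circleAverage_zero (f := f) (c := 0), ← intervalIntegral.integral_const_mul]
  refine (intervalIntegral.integral_eq_sub_of_hasDerivAt_of_le (f' := fun r => (π : ℂ)⁻¹ * B r)
    hε (fun r hr => (hasDerivAt_circleAverage_radius hf (hsmall r hr)).continuousAt
      |>.continuousWithinAt) (fun r hr => ?_)
    ((continuousOn_const.mul hB).intervalIntegrable_of_Icc hε)).symm
  have hrR := hsmall r (Ioo_subset_Icc_self hr)
  refine (hasDerivAt_circleAverage_radius hf hrR).congr_deriv ?_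
  rw [integral_fderiv_circleMap_exp hf hr.1.ne' hrR, Complex.real_smul]
  push_cast
  field_simp
  rfl

end RealC1

/-- Cauchy–Pompeiu formula: if `f` is real-`C¹` on a neighbourhood of the closed disc of
radius `ε` about `0`, then
`f(0) = (2πi)⁻¹ ∮_{|σ|=ε} f(σ)/σ dσ + (2πi)⁻¹ ∬_{|σ|<ε} (∂f/∂σ̄)(σ) (dσ∧dσ̄)/σ`,
where the area integral uses `dσ ∧ dσ̄ = −2i·dA`. -/
theorem stmt_7 (f : ℂ → ℂ) (ε ε' : ℝ) (hε : 0 < ε) (hεε' : ε < ε')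
    (hf : ContDiffOn ℝ 1 f (Metric.closedBall (0:ℂ) ε')) :
    f 0 = (2 * Real.pi * Complex.I)⁻¹ * (∮ σ in C(0, ε), f σ / σ)
        + (2 * Real.pi * Complex.I)⁻¹ *
            ∫ σ in Metric.ball (0:ℂ) ε, wirtingerBar f σ * (-2 * Complex.I) / σ := by
  have hf' : ContDiffOn ℝ 1 f (ball 0 ε') := hf.mono ball_subset_closedBall
  have hcontour : (2 * π * I)⁻¹ * (∮ σ in C(0, ε), f σ / σ) = Real.circleAverage f 0 ε := by
    rw [Real.circleAverage_eq_circleIntegral hε.ne', smul_eq_mul]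
    simp_rw [sub_zero, smul_eq_mul, div_eq_inv_mul]
  have harea : ∫ σ in ball 0 ε, wirtingerBar f σ * (-2 * I) / σ = -2 * I *
      ∫ r in 0..ε, ∫ θ in 0..2 * π, wirtingerBar f (circleMap 0 r θ) * exp (-(θ * I)) := by
    rw [setIntegral_ball_div_eq_intervalIntegral (g := fun σ => wirtingerBar f σ * (-2 * I)) hε.le
      ((hf'.continuousOn_wirtingerBar.mono (closedBall_subset_ball hεε')).mul continuousOn_const),
      ← intervalIntegral.integral_const_mul]
    refine intervalIntegral.integral_congr fun r _ => ?_
    rw [← intervalIntegral.integral_const_mul]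
    exact intervalIntegral.integral_congr fun θ _ => by ring
  have hcoef : (2 * π * I)⁻¹ * (-2 * I) = -(π : ℂ)⁻¹ := by
    field_simp
  rw [hcontour, harea, ← mul_assoc, hcoef]
  linear_combination (-1 : ℂ) * circleAverage_sub_eq_integral_wirtingerBar hf' hε.le hεε'
end

section
/- Let v = (w−a)/(1−aw) with a ∈ (−1,1) real, where z = exp((w+1)/(w−1)) defines w as a function of z on the punctured disc. Then dv = ((|v|²−1)(v−1)/(v̄−1)) · dz/(z·log(1/|z|²)). -/
/-!
With `c = w̄`, both sides are rational functions of `w`, `c` and `a`: `|v|² = v v̄`,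
`v̄ = (c - a)/(1 - a c)`, and `log (1/|z|²) = -2 Re u = -(u + ū)` for `u = (w+1)/(w-1)`.
The identity then follows from the three factorizations
`v - 1 = (1+a)(w-1)/(1-aw)`, `v v̄ - 1 = -(1-a²)(1-wc)/((1-aw)(1-ac))` and
`u + ū = 2(wc-1)/((w-1)(c-1))`; all denominators are nonzero because `|w| < 1` and `|a| < 1`.
-/

open Complex ComplexConjugate

section Algebra

variable {a w c : ℂ}

theorem moebius_sub_one (haw : 1 - a * w ≠ 0) :
    (w - a) / (1 - a * w) - 1 = (1 + a) * (w - 1) / (1 - a * w) := by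
  rw [div_sub_one haw]
  ring

theorem moebius_mul_moebius_sub_one (haw : 1 - a * w ≠ 0) (hac : 1 - a * c ≠ 0) :
    (w - a) / (1 - a * w) * ((c - a) / (1 - a * c)) - 1
      = -((1 - a ^ 2) * (1 - w * c)) / ((1 - a * w) * (1 - a * c)) := by
  rw [div_mul_div_comm, div_sub_one (mul_ne_zero haw hac)]
  ring

theorem cayley_add_cayley (hw : w - 1 ≠ 0) (hc : c - 1 ≠ 0) :
    (w + 1) / (w - 1) + (c + 1) / (c - 1) = 2 * (w * c - 1) / ((w - 1) * (c - 1)) := by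
  field_simp
  ring

end Algebra

theorem hasDerivAt_moebius (a : ℂ) {w : ℂ} (haw : 1 - a * w ≠ 0) :
    HasDerivAt (fun w => (w - a) / (1 - a * w)) ((1 - a ^ 2) / (1 - a * w) ^ 2) w := by
  refine (((hasDerivAt_id' w).sub_const a).fun_div
    (((hasDerivAt_id' w).const_mul a).const_sub 1) haw).congr_deriv ?_
  field_simp
  ring

theorem hasDerivAt_exp_cayley {w : ℂ} (hw : w - 1 ≠ 0) :
    HasDerivAt (fun w => exp ((w + 1) / (w - 1)))
      (exp ((w + 1) / (w - 1)) * (-2 / (w - 1) ^ 2)) w := by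
  refine (((hasDerivAt_id' w).add_const 1).fun_div
    ((hasDerivAt_id' w).sub_const 1) hw).cexp.congr_deriv ?_
  field_simp
  ring

theorem ofReal_log_one_div_norm_exp_sq (u : ℂ) :
    (Real.log (1 / ‖exp u‖ ^ 2) : ℂ) = -(u + conj u) := by
  rw [norm_exp, one_div, Real.log_inv, Real.log_pow, Real.log_exp, add_conj]
  push_cast
  ring

theorem one_sub_mul_ne_zero_of_norm_lt_one {a w : ℂ} (ha : ‖a‖ < 1) (hw : ‖w‖ ≤ 1) :
    1 - a * w ≠ 0 := by
  rw [sub_ne_zero]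
  intro h
  have : ‖a * w‖ < 1 := by
    rw [norm_mul]
    nlinarith [norm_nonneg a, norm_nonneg w]
  simp [← h] at this

/-- Quasi-coordinate differential identity: with `v = (w−a)/(1−aw)` (`a ∈ (−1,1)` real)
and `z = exp((w+1)/(w−1))` on the unit disc, one has
`dv = ((|v|²−1)(v−1)/(v̄−1)) · dz/(z·log(1/|z|²))`, expressed via derivatives in `w`. -/
theorem stmt_17 (a : ℝ) (ha : -1 < a) (ha' : a < 1) (w : ℂ) (hw : ‖w‖ < 1) :
    deriv (fun w : ℂ => (w - (a : ℂ)) / (1 - (a : ℂ) * w)) w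
      = (((‖(w - (a : ℂ)) / (1 - (a : ℂ) * w)‖ : ℂ) ^ 2 - 1)
            * ((w - (a : ℂ)) / (1 - (a : ℂ) * w) - 1)
            / ((starRingEnd ℂ) ((w - (a : ℂ)) / (1 - (a : ℂ) * w)) - 1))
          * deriv (fun w : ℂ => Complex.exp ((w + 1) / (w - 1))) w
          / (Complex.exp ((w + 1) / (w - 1))
              * (Real.log (1 / ‖Complex.exp ((w + 1) / (w - 1))‖ ^ 2) : ℂ)) := by
  have hnorm_a : ‖(a : ℂ)‖ < 1 := by rw [norm_real, Real.norm_eq_abs, abs_lt]; exact ⟨ha, ha'⟩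
  have haw := one_sub_mul_ne_zero_of_norm_lt_one hnorm_a hw.le
  have hac := one_sub_mul_ne_zero_of_norm_lt_one hnorm_a (norm_conj w ▸ hw.le)
  have hwc : w * conj w - 1 ≠ 0 := by
    rw [← neg_ne_zero, neg_sub]
    exact one_sub_mul_ne_zero_of_norm_lt_one hw (norm_conj w ▸ hw.le)
  have hw1 : w - 1 ≠ 0 := sub_ne_zero.mpr fun h => by simp [h] at hw
  have hc1 : conj w - 1 ≠ 0 := by simpa using (map_ne_zero (conj : ℂ →+* ℂ)).mpr hw1
  have ha1 : 1 + (a : ℂ) ≠ 0 := by norm_cast; linarith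
  have hconj : conj ((w - a) / (1 - a * w)) = (conj w - a) / (1 - a * conj w) := by
    simp [map_div₀]
  have hconj_cayley : conj ((w + 1) / (w - 1)) = (conj w + 1) / (conj w - 1) := by
    simp [map_div₀]
  rw [(hasDerivAt_moebius _ haw).deriv, (hasDerivAt_exp_cayley hw1).deriv,
    ofReal_log_one_div_norm_exp_sq, ← mul_conj', hconj, moebius_mul_moebius_sub_one haw hac,
    moebius_sub_one haw, moebius_sub_one hac, hconj_cayley,
    cayley_add_cayley hw1 hc1]
  field_simp
  ring
end
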